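/- Let 𝔟 be the upper triangular n×n real matrices and define 𝔥 = 𝔞_◇ ⊕ 𝔰 ⊕ 𝔳⁺, where 𝔞_◇ = span{e_{r,r} + e_{n-r+1,n-r+1} : 1 ≤ r ≤ ⌊n/2⌋} (plus e_{(n+1)/2,(n+1)/2} if n is odd), 𝔰 = span{e_{r,n-r+1} : 1 ≤ r ≤ ⌊n/2⌋}, and 𝔳⁺ = span{e_{i,j} : i < j < n-i+1}. Then 𝔥 is a Lie subalgebra of 𝔟 with [𝔥,𝔥] ⊆ 𝔳⁺, and dim 𝔥 = ⌈n/2⌉ + ⌊n/2⌋ + dim 𝔳⁺. -/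

import Mathlib

open Matrix

/-- Elementary matrix `e_{i,j}` (0-based indices). -/
def elemMat (n : ℕ) (i j : Fin n) : Matrix (Fin n) (Fin n) ℝ :=
  Matrix.single i j 1

/-- Spanning set of `𝔞_◇`: the matrices `e_{r,r} + e_{n-r+1,n-r+1}` (1-based), i.e.
`e_{r,r} + e_{n-1-r,n-1-r}` for `2r ≤ n-1` in 0-based indices (when `n` is odd and
`r` is the middle index this gives `2 e_{r,r}`). -/
def aSet (n : ℕ) : Set (Matrix (Fin n) (Fin n) ℝ) :=
  {X | ∃ r : Fin n, 2 * (r : ℕ) ≤ n - 1 ∧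
    ∃ h : n - 1 - (r : ℕ) < n,
      X = elemMat n r r + elemMat n ⟨n - 1 - (r : ℕ), h⟩ ⟨n - 1 - (r : ℕ), h⟩}

/-- Spanning set of `𝔰`: the matrices `e_{r,n-r+1}` for `1 ≤ r ≤ ⌊n/2⌋` (1-based), i.e.
`e_{r, n-1-r}` for `2r + 2 ≤ n` in 0-based indices. -/
def sSet (n : ℕ) : Set (Matrix (Fin n) (Fin n) ℝ) :=
  {X | ∃ r : Fin n, 2 * (r : ℕ) + 2 ≤ n ∧
    ∃ h : n - 1 - (r : ℕ) < n, X = elemMat n r ⟨n - 1 - (r : ℕ), h⟩}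

/-- Spanning set of `𝔳⁺`: the matrices `e_{i,j}` for `i < j < n-i+1` (1-based), i.e.
`i < j < n-1-i` in 0-based indices. -/
def vSet (n : ℕ) : Set (Matrix (Fin n) (Fin n) ℝ) :=
  {X | ∃ i j : Fin n, (i : ℕ) < (j : ℕ) ∧ (j : ℕ) < n - 1 - (i : ℕ) ∧ X = elemMat n i j}

/-- The polarization subalgebra `𝔥 = 𝔞_◇ ⊕ 𝔰 ⊕ 𝔳⁺`. -/
def hAlg (n : ℕ) : Submodule ℝ (Matrix (Fin n) (Fin n) ℝ) :=
  Submodule.span ℝ (aSet n ∪ sSet n ∪ vSet n)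

/-!
A generator of `𝔞_◇` is a diagonal matrix `diagonal d` with `d i = d (n + 1 - i)`, and
`[diagonal d, e_{i,j}] = (d i - d j) e_{i,j}`. Hence `𝔞_◇` is abelian, commutes with the
antidiagonal `𝔰` and preserves `𝔳⁺`. The generators of `𝔰 ⊕ 𝔳⁺` are the `e_{i,j}` with
`i < j ≤ n + 1 - i`, and for two of them `e_{i,j} e_{j,l} = e_{i,l}` has `i < l < n + 1 - i`,
so all brackets land in `𝔳⁺`. The sum is direct because `𝔞_◇` lives on the diagonal, `𝔰` on
the antidiagonal and `𝔳⁺` off both; `𝔞_◇` and `𝔰` have evident bases indexed by `r < ⌈n/2⌉`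
and `r < ⌊n/2⌋`.
-/

section Commutator

variable {R A : Type*} [CommRing R] [Ring A] [Algebra R A]

theorem commutator_mem_of_mem_span {S : Set A} {V : Submodule R A}
    (h : ∀ x ∈ S, ∀ y ∈ S, x * y - y * x ∈ V) {x y : A}
    (hx : x ∈ Submodule.span R S) (hy : y ∈ Submodule.span R S) : x * y - y * x ∈ V := by
  let bracket : A →ₗ[R] A →ₗ[R] A := LinearMap.mul R A - (LinearMap.mul R A).flip
  have hle : Submodule.map₂ bracket (Submodule.span R S) (Submodule.span R S) ≤ V := by
    rw [Submodule.map₂_span_span, Submodule.span_le]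
    rintro _ ⟨x, hx, y, hy, rfl⟩
    exact h x hx y hy
  exact hle (Submodule.apply_mem_map₂ bracket hx hy)

end Commutator

namespace Matrix

variable {m n ι R : Type*}

def vanishingOn [Semiring R] (P : m → n → Prop) : Submodule R (Matrix m n R) where
  carrier := {X | ∀ i j, P i j → X i j = 0}
  add_mem' hX hY i j h := by simp [hX i j h, hY i j h]
  zero_mem' _ _ _ := rfl
  smul_mem' c X hX i j h := by simp [hX i j h]

section Semiring

variable [Semiring R] {P Q : m → n → Prop}

theorem vanishingOn_mono (h : ∀ i j, Q i j → P i j) :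
    (vanishingOn P : Submodule R (Matrix m n R)) ≤ vanishingOn Q :=
  fun _ hX i j hQ => hX i j (h i j hQ)

theorem single_mem_vanishingOn [DecidableEq m] [DecidableEq n] {i : m} {j : n} (h : ¬ P i j)
    (c : R) : single i j c ∈ vanishingOn P := by
  intro a b hab
  refine single_apply_of_ne _ _ _ _ _ ?_
  rintro ⟨rfl, rfl⟩
  exact h hab

theorem disjoint_vanishingOn (h : ∀ i j, P i j ∨ Q i j) :
    Disjoint (vanishingOn P : Submodule R (Matrix m n R)) (vanishingOn Q) := by
  rw [Submodule.disjoint_def]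
  intro X hP hQ
  ext i j
  exact (h i j).elim (hP i j) (hQ i j)

end Semiring

theorem diagonal_mul_single_sub_single_mul_diagonal [Fintype n] [DecidableEq n] [Ring R]
    (d : n → R) (i j : n) (c : R) :
    diagonal d * single i j c - single i j c * diagonal d = single i j (d i * c - c * d j) := by
  ext a b
  simp only [sub_apply, diagonal_mul, mul_diagonal, single_apply]
  split_ifs with h
  · rw [h.1, h.2]
  · simp

theorem linearIndependent_of_apply [Fintype ι] [Ring R] [NoZeroDivisors R]
    {v : ι → Matrix m n R} (a : ι → m) (b : ι → n) (hne : ∀ r, v r (a r) (b r) ≠ 0)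
    (hzero : ∀ q r, q ≠ r → v q (a r) (b r) = 0) : LinearIndependent R v := by
  rw [Fintype.linearIndependent_iff]
  intro g hg r
  have hentry := congrFun (congrFun hg (a r)) (b r)
  simp only [sum_apply, smul_apply, smul_eq_mul, zero_apply] at hentry
  rw [Finset.sum_eq_single r (fun q _ hq => by rw [hzero q r hq, mul_zero])
    (fun hr => absurd (Finset.mem_univ r) hr)] at hentry
  exact (mul_eq_zero.mp hentry).resolve_right (hne r)

end Matrix

theorem Submodule.finrank_sup_of_disjoint {K V : Type*} [DivisionRing K] [AddCommGroup V]
    [Module K V] {s t : Submodule K V} [FiniteDimensional K s] [FiniteDimensional K t]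
    (h : Disjoint s t) : Module.finrank K ↥(s ⊔ t) = Module.finrank K s + Module.finrank K t := by
  rw [← Submodule.finrank_sup_add_finrank_inf_eq, h.eq_bot, finrank_bot, add_zero]

open Submodule

section Brackets

variable {n : ℕ}

theorem elemMat_mul_elemMat (i j k l : Fin n) :
    elemMat n i j * elemMat n k l = if (j : ℕ) = k then elemMat n i l else 0 := by
  split_ifs with h
  · rw [Fin.ext h]
    simp [elemMat]
  · exact single_mul_single_of_ne (c := (1 : ℝ)) i j k (fun hjk => h (congrArg Fin.val hjk)) 1

theorem isDiag_of_mem_aSet {X : Matrix (Fin n) (Fin n) ℝ} (hX : X ∈ aSet n) : X.IsDiag := by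
  obtain ⟨r, -, -, rfl⟩ := hX
  intro i j hij
  simp only [elemMat, Matrix.add_apply, single_apply, Fin.ext_iff]
  split_ifs <;> grind

theorem apply_eq_of_mem_aSet {X : Matrix (Fin n) (Fin n) ℝ} (hX : X ∈ aSet n) {i j : Fin n}
    (h : (i : ℕ) + j + 1 = n) : X i i = X j j := by
  obtain ⟨r, -, -, rfl⟩ := hX
  simp only [elemMat, Matrix.add_apply, single_apply, Fin.ext_iff, and_self]
  split_ifs <;> grind

theorem exists_eq_elemMat_of_mem_sSet_union_vSet {X : Matrix (Fin n) (Fin n) ℝ}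
    (hX : X ∈ sSet n ∪ vSet n) :
    ∃ i j : Fin n, (i : ℕ) < j ∧ (i : ℕ) + j < n ∧ X = elemMat n i j := by
  rcases hX with ⟨r, hr, h, rfl⟩ | ⟨i, j, hij, hj, rfl⟩
  · exact ⟨r, _, by simp only; omega, by simp only; omega, rfl⟩
  · exact ⟨i, j, hij, by omega, rfl⟩

theorem elemMat_mem_span_vSet {i j : Fin n} (hij : (i : ℕ) < j) (hj : (j : ℕ) < n - 1 - i) :
    elemMat n i j ∈ span ℝ (vSet n) :=
  subset_span ⟨i, j, hij, hj, rfl⟩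

theorem elemMat_mul_elemMat_mem_span_vSet {i j k l : Fin n} (hij : (i : ℕ) < j)
    (hkl : (k : ℕ) < l) (hl : (k : ℕ) + l < n) :
    elemMat n i j * elemMat n k l ∈ span ℝ (vSet n) := by
  rw [elemMat_mul_elemMat]
  split_ifs with h
  · exact elemMat_mem_span_vSet (by omega) (by omega)
  · exact zero_mem _

theorem commutator_elemMat_mem_span_vSet {X : Matrix (Fin n) (Fin n) ℝ} (hX : X ∈ aSet n)
    {i j : Fin n} (hij : (i : ℕ) < j) (hj : (i : ℕ) + j < n) :
    X * elemMat n i j - elemMat n i j * X ∈ span ℝ (vSet n) := by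
  rw [← (isDiag_of_mem_aSet hX).diagonal_diag, elemMat,
    diagonal_mul_single_sub_single_mul_diagonal, diag_apply, diag_apply, mul_one, one_mul]
  rcases (by omega : (i : ℕ) + j + 1 = n ∨ (i : ℕ) + j + 1 < n) with hanti | hv
  · rw [apply_eq_of_mem_aSet hX hanti, sub_self, single_zero]
    exact zero_mem _
  · rw [← mul_one (X i i - X j j), ← smul_eq_mul, ← smul_single]
    exact smul_mem _ _ (elemMat_mem_span_vSet hij (by omega))

theorem commutator_mem_span_vSet {X Y : Matrix (Fin n) (Fin n) ℝ}
    (hX : X ∈ aSet n ∪ sSet n ∪ vSet n) (hY : Y ∈ aSet n ∪ sSet n ∪ vSet n) :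
    X * Y - Y * X ∈ span ℝ (vSet n) := by
  rw [Set.union_assoc] at hX hY
  rcases hX with hX | hX <;> rcases hY with hY | hY
  · rw [← (isDiag_of_mem_aSet hX).diagonal_diag, ← (isDiag_of_mem_aSet hY).diagonal_diag,
      (commute_diagonal _ _).eq, sub_self]
    exact zero_mem _
  · obtain ⟨i, j, hij, hj, rfl⟩ := exists_eq_elemMat_of_mem_sSet_union_vSet hY
    exact commutator_elemMat_mem_span_vSet hX hij hj
  · obtain ⟨i, j, hij, hj, rfl⟩ := exists_eq_elemMat_of_mem_sSet_union_vSet hX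
    rw [← neg_sub]
    exact neg_mem (commutator_elemMat_mem_span_vSet hY hij hj)
  · obtain ⟨i, j, hij, hj, rfl⟩ := exists_eq_elemMat_of_mem_sSet_union_vSet hX
    obtain ⟨k, l, hkl, hl, rfl⟩ := exists_eq_elemMat_of_mem_sSet_union_vSet hY
    exact sub_mem (elemMat_mul_elemMat_mem_span_vSet hij hkl hl)
      (elemMat_mul_elemMat_mem_span_vSet hkl hij hj)

end Brackets

def aGen (n : ℕ) (r : Fin ((n + 1) / 2)) : Matrix (Fin n) (Fin n) ℝ :=
  elemMat n ⟨r, by omega⟩ ⟨r, by omega⟩ + elemMat n ⟨n - 1 - r, by omega⟩ ⟨n - 1 - r, by omega⟩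

def sGen (n : ℕ) (r : Fin (n / 2)) : Matrix (Fin n) (Fin n) ℝ :=
  elemMat n ⟨r, by omega⟩ ⟨n - 1 - r, by omega⟩

theorem aSet_eq_range_aGen (n : ℕ) : aSet n = Set.range (aGen n) := by
  ext X
  constructor
  · rintro ⟨r, hr, -, rfl⟩
    exact ⟨⟨r, by omega⟩, rfl⟩
  · rintro ⟨r, rfl⟩
    exact ⟨⟨r, by omega⟩, by simp only; omega, by omega, rfl⟩

theorem sSet_eq_range_sGen (n : ℕ) : sSet n = Set.range (sGen n) := by
  ext X
  constructor
  · rintro ⟨r, hr, -, rfl⟩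
    exact ⟨⟨r, by omega⟩, rfl⟩
  · rintro ⟨r, rfl⟩
    exact ⟨⟨r, by omega⟩, by simp only; omega, by omega, rfl⟩

theorem linearIndependent_aGen (n : ℕ) : LinearIndependent ℝ (aGen n) := by
  refine linearIndependent_of_apply (fun r => ⟨r, by omega⟩) (fun r => ⟨r, by omega⟩) ?_ ?_
  · intro r
    simp only [aGen, elemMat, Matrix.add_apply, single_apply, Fin.ext_iff]
    split_ifs <;> grind
  · intro q r hqr
    simp only [aGen, elemMat, Matrix.add_apply, single_apply, Fin.ext_iff]
    split_ifs <;> grind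

theorem linearIndependent_sGen (n : ℕ) : LinearIndependent ℝ (sGen n) := by
  refine linearIndependent_of_apply (fun r => ⟨r, by omega⟩) (fun r => ⟨n - 1 - r, by omega⟩)
    ?_ ?_
  · intro r
    simp [sGen, elemMat]
  · intro q r hqr
    simp only [sGen, elemMat, single_apply, Fin.ext_iff]
    split_ifs <;> grind

theorem span_aSet_le_vanishingOn (n : ℕ) :
    span ℝ (aSet n) ≤ vanishingOn (· ≠ · : Fin n → Fin n → Prop) :=
  span_le.mpr fun _ hX _ _ hij => isDiag_of_mem_aSet hX hij

theorem span_sSet_union_vSet_le_vanishingOn (n : ℕ) :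
    span ℝ (sSet n ∪ vSet n) ≤ vanishingOn fun i j : Fin n => ¬ (i : ℕ) < j := by
  refine span_le.mpr fun X hX => ?_
  obtain ⟨i, j, hij, -, rfl⟩ := exists_eq_elemMat_of_mem_sSet_union_vSet hX
  exact single_mem_vanishingOn (not_not.mpr hij) 1

theorem span_sSet_le_vanishingOn (n : ℕ) :
    span ℝ (sSet n) ≤ vanishingOn fun i j : Fin n => (i : ℕ) + j + 1 ≠ n := by
  refine span_le.mpr ?_
  rintro _ ⟨r, hr, -, rfl⟩
  exact single_mem_vanishingOn (by simp only [ne_eq, not_not]; omega) 1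

theorem span_vSet_le_vanishingOn (n : ℕ) :
    span ℝ (vSet n) ≤ vanishingOn fun i j : Fin n => (i : ℕ) + j + 1 = n := by
  refine span_le.mpr ?_
  rintro _ ⟨i, j, -, hj, rfl⟩
  exact single_mem_vanishingOn (by omega) 1

theorem hAlg_le_vanishingOn_lower (n : ℕ) :
    hAlg n ≤ vanishingOn fun i j : Fin n => (j : ℕ) < i := by
  rw [hAlg, Set.union_assoc, span_union]
  refine sup_le ((span_aSet_le_vanishingOn n).trans (vanishingOn_mono ?_))
    ((span_sSet_union_vSet_le_vanishingOn n).trans (vanishingOn_mono ?_))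
  · exact fun i j hji hij => hji.ne (congrArg Fin.val hij).symm
  · exact fun i j hji => hji.asymm

theorem finrank_hAlg (n : ℕ) :
    Module.finrank ℝ (hAlg n) =
      (n + 1) / 2 + n / 2 + Module.finrank ℝ (span ℝ (vSet n)) := by
  have hsv : Disjoint (span ℝ (sSet n)) (span ℝ (vSet n)) :=
    (disjoint_vanishingOn fun _ _ => em' _).mono
      (span_sSet_le_vanishingOn n) (span_vSet_le_vanishingOn n)
  have hasv : Disjoint (span ℝ (aSet n)) (span ℝ (sSet n ∪ vSet n)) :=
    (disjoint_vanishingOn fun i j => by rcases eq_or_ne i j with rfl | h <;> simp [*]).mono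
      (span_aSet_le_vanishingOn n) (span_sSet_union_vSet_le_vanishingOn n)
  rw [hAlg, Set.union_assoc, span_union, finrank_sup_of_disjoint hasv, span_union,
    finrank_sup_of_disjoint hsv, aSet_eq_range_aGen, sSet_eq_range_sGen,
    finrank_span_eq_card (linearIndependent_aGen n),
    finrank_span_eq_card (linearIndependent_sGen n), Fintype.card_fin, Fintype.card_fin, add_assoc]

theorem hAlg_subalgebra (n : ℕ) :
    (∀ X ∈ hAlg n, ∀ i j : Fin n, (j : ℕ) < (i : ℕ) → X i j = 0) ∧
    (∀ X ∈ hAlg n, ∀ Y ∈ hAlg n, X * Y - Y * X ∈ Submodule.span ℝ (vSet n)) ∧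
    Module.finrank ℝ (hAlg n) =
      (n + 1) / 2 + n / 2 + Module.finrank ℝ (Submodule.span ℝ (vSet n)) :=
  ⟨fun _ hX => hAlg_le_vanishingOn_lower n hX,
    fun _ hX _ hY =>
      commutator_mem_of_mem_span (fun _ hx _ hy => commutator_mem_span_vSet hx hy) hX hY,
    finrank_hAlg n⟩
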